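/- arXiv:1807.02973 — 8 statements merged into one kernel-verified Lean document; each statement's English description precedes it below -/
import Mathlib

section
/- Let N = (P, T, Pre, Post, m₀) be a marked Petri net and let t ∈ T be a redundant transition, i.e., there exists a firing sequence σ consisting only of transitions in T ∖ {t} such that Δ(σ) = Δ(t) and σ is firable from the marking Pre(t). Let N' = (P, T ∖ {t}, Pre, Post, m₀) be the net obtained from N by removing t. Then R(N) = R(N'). -/
/-! Marked Petri nets with places drawn from a type `X` and transitions drawn from a type `T`.
Markings are total functions `X → ℕ`; a marking (valuation) "on a set of places `V`" is a
function that vanishes outside of `V`. -/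

/-- The restriction of a valuation to a set `V` (zero outside `V`). -/
noncomputable def restrictTo {X : Type} (V : Set X) (f : X → ℕ) : X → ℕ :=
  V.indicator f

/-- Valuations on `V`: functions vanishing outside `V`. -/
def ValuationOn {X : Type} (V : Set X) : Set (X → ℕ) :=
  {f | ∀ x, x ∉ V → f x = 0}

/-- Lifting of a set `E` of valuations on `V` to a superset `U` of `V`:
the valuations on `U` whose restriction to `V` lies in `E`. -/
def liftTo {X : Type} (E : Set (X → ℕ)) (V U : Set X) : Set (X → ℕ) :=
  {f | f ∈ ValuationOn U ∧ restrictTo V f ∈ E}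

/-- Projection of a set `E` of valuations to a subset `U`: the restrictions to `U`
of the members of `E`. -/
def projTo {X : Type} (E : Set (X → ℕ)) (U : Set X) : Set (X → ℕ) :=
  (restrictTo U) '' E

/-- A marked Petri net `N = (P, T, Pre, Post, m₀)`. The set of places is `N.places ⊆ X`
and the set of transitions is `N.trans ⊆ T`. -/
structure PNet (X T : Type) where
  places : Set X
  trans : Set T
  Pre : T → X → ℕ
  Post : T → X → ℕ
  m0 : X → ℕ

namespace PNet

variable {X T : Type}

/-- Well-formedness: the sets of places and transitions are finite, and the initial
marking as well as the pre/post-conditions of the transitions vanish outside the places. -/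
def WF (N : PNet X T) : Prop :=
  N.places.Finite ∧ N.trans.Finite ∧
    (∀ x, x ∉ N.places → N.m0 x = 0) ∧
    (∀ t ∈ N.trans, ∀ x, x ∉ N.places → N.Pre t x = 0 ∧ N.Post t x = 0)

/-- A transition `t` is enabled at marking `m` if `m ≥ Pre(t)` pointwise. -/
def Enabled (N : PNet X T) (t : T) (m : X → ℕ) : Prop :=
  t ∈ N.trans ∧ ∀ x, N.Pre t x ≤ m x

/-- The marking obtained by firing `t` at `m` : `m - Pre(t) + Post(t)`. -/
def fire (N : PNet X T) (t : T) (m : X → ℕ) : X → ℕ :=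
  fun x => m x - N.Pre t x + N.Post t x

/-- One-step firing relation between markings. -/
def Step (N : PNet X T) (m m' : X → ℕ) : Prop :=
  ∃ t, N.Enabled t m ∧ m' = N.fire t m

/-- The reachability set (state space) `R(N)`: all markings reachable from `m₀`. -/
def R (N : PNet X T) : Set (X → ℕ) :=
  {m | Relation.ReflTransGen N.Step N.m0 m}

/-- `FireSeq N m σ m'` : the firing sequence `σ` can be fired from `m`, yielding `m'`. -/
def FireSeq (N : PNet X T) : (X → ℕ) → List T → (X → ℕ) → Prop
  | m, [], m' => m' = m
  | m, t :: σ, m' => N.Enabled t m ∧ FireSeq N (N.fire t m) σ m'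

/-- The sequence `σ` is firable from the marking `m`. -/
def Firable (N : PNet X T) (m : X → ℕ) (σ : List T) : Prop :=
  ∃ m', N.FireSeq m σ m'

/-- Displacement `Δ(t) = Post(t) - Pre(t) : P → ℤ` of a transition. -/
def delta (N : PNet X T) (t : T) : X → ℤ :=
  fun x => (N.Post t x : ℤ) - (N.Pre t x : ℤ)

/-- Displacement `Δ(σ)` of a firing sequence. -/
def deltaSeq (N : PNet X T) (σ : List T) : X → ℤ :=
  fun x => (σ.map (fun t => N.delta t x)).sum

/-- `t` is a redundant transition witnessed by the sequence `σ`: `σ` avoids `t`,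
has the same displacement as `t`, and is firable from the marking `Pre(t)`
(i.e. `H(t) ≥ H(σ)`). -/
def RedundantTransition (N : PNet X T) (t : T) (σ : List T) : Prop :=
  t ∈ N.trans ∧ (∀ u ∈ σ, u ∈ N.trans ∧ u ≠ t) ∧
    N.deltaSeq σ = N.delta t ∧ N.Firable (N.Pre t) σ

/-- The net obtained by removing transition `t`. -/
def removeTrans (N : PNet X T) (t : T) : PNet X T :=
  { N with trans := N.trans \ {t} }

/-- `p` is a redundant place, witnessed by the set of places `I ⊆ P ∖ {p}`, the
valuation `v` (positive on `I ∪ {p}`) and the constant `b`. -/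
def RedundantPlace (N : PNet X T) (p : X) (I : Finset X) (v : X → ℕ) (b : ℕ) : Prop :=
  p ∈ N.places ∧ ↑I ⊆ N.places \ {p} ∧ v p ≠ 0 ∧ (∀ q ∈ I, v q ≠ 0) ∧
    ((b : ℤ) = (v p : ℤ) * (N.m0 p : ℤ) - ∑ q ∈ I, (v q : ℤ) * (N.m0 q : ℤ)) ∧
    (∀ t ∈ N.trans,
      (v p : ℤ) * (N.Pre t p : ℤ) - ∑ q ∈ I, (v q : ℤ) * (N.Pre t q : ℤ) ≤ (b : ℤ)) ∧
    (∀ t ∈ N.trans,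
      (v p : ℤ) * ((N.Post t p : ℤ) - (N.Pre t p : ℤ))
        = ∑ q ∈ I, (v q : ℤ) * ((N.Post t q : ℤ) - (N.Pre t q : ℤ)))

/-- The net obtained by removing place `p` (restriction to `P ∖ {p}`). -/
noncomputable def removePlace (N : PNet X T) (p : X) : PNet X T where
  places := N.places \ {p}
  trans := N.trans
  Pre := fun t => restrictTo (N.places \ {p}) (N.Pre t)
  Post := fun t => restrictTo (N.places \ {p}) (N.Post t)
  m0 := restrictTo (N.places \ {p}) N.m0

/-- Place `a` is the sum of places `p` and `q`, written `a = p ⊞ q`. -/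
def IsSumPlace (N : PNet X T) (a p q : X) : Prop :=
  N.m0 a = N.m0 p + N.m0 q ∧
    ∀ t ∈ N.trans, N.Pre t a = N.Pre t p + N.Pre t q ∧ N.Post t a = N.Post t p + N.Post t q

/-- Places `p` and `q` are chain-agglomerable, witnessed by the transition `t`. -/
def ChainAgglomerable (N : PNet X T) (p q : X) (t : T) : Prop :=
  p ∈ N.places ∧ q ∈ N.places ∧ p ≠ q ∧ t ∈ N.trans ∧
    N.Pre t p = 1 ∧ (∀ r, r ≠ p → N.Pre t r = 0) ∧
    N.Post t q = 1 ∧ (∀ r, r ≠ q → N.Post t r = 0) ∧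
    (∀ t' ∈ N.trans, t' ≠ t → N.Post t' q = 0) ∧
    N.m0 q = 0

/-- Agglomeration of the set of places `A` as the fresh place `a`: the places become
`(P ∖ A) ∪ {a}`, the place `a` behaves as the sum of the places of `A`, and everything
else is unchanged. -/
noncomputable def agglom [DecidableEq X] (N : PNet X T) (A : Finset X) (a : X) : PNet X T where
  places := (N.places \ ↑A) ∪ {a}
  trans := N.trans
  Pre := fun u => Function.update (restrictTo (N.places \ ↑A) (N.Pre u)) a (∑ x ∈ A, N.Pre u x)
  Post := fun u => Function.update (restrictTo (N.places \ ↑A) (N.Post u)) a (∑ x ∈ A, N.Post u x)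
  m0 := Function.update (restrictTo (N.places \ ↑A) N.m0) a (∑ x ∈ A, N.m0 x)

/-- `(p, t)` is a source-sink pair. -/
def SourceSink (N : PNet X T) (p : X) (t : T) : Prop :=
  p ∈ N.places ∧ t ∈ N.trans ∧
    (∀ u ∈ N.trans, N.Post u p = 0) ∧
    (∀ u ∈ N.trans, u ≠ t → N.Pre u p = 0) ∧
    N.Pre t p = 1 ∧ (∀ r, r ≠ p → N.Pre t r = 0) ∧
    (∀ r, N.Post t r = 0)

/-- The net obtained by removing the source-sink pair `(p, t)`. -/
noncomputable def removeSourceSink (N : PNet X T) (p : X) (t : T) : PNet X T where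
  places := N.places \ {p}
  trans := N.trans \ {t}
  Pre := fun u => restrictTo (N.places \ {p}) (N.Pre u)
  Post := fun u => restrictTo (N.places \ {p}) (N.Post u)
  m0 := restrictTo (N.places \ {p}) N.m0

end PNet

/-- `(N₁, (W, S), N₂)` is a net-abstraction:
`R(N₁) = ((R(N₂) ↑ V) ∩ (S ↑ V)) ↓ P₁` where `V = W ∪ P₁ ∪ P₂`. -/
def NetAbstraction {X T₁ T₂ : Type} (N₁ : PNet X T₁) (W : Set X) (S : Set (X → ℕ))
    (N₂ : PNet X T₂) : Prop :=
  N₁.R = projTo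
    (liftTo N₂.R N₂.places (W ∪ N₁.places ∪ N₂.places) ∩
      liftTo S W (W ∪ N₁.places ∪ N₂.places))
    N₁.places

/-! Firing `t` at a marking `m ≥ Pre(t)` is simulated by firing `σ` from `m`: `σ` is firable
from `Pre(t)`, hence, by monotonicity of firing, from `m = Pre(t) + (m - Pre(t))`, and it leads
to `m + Δ(σ) = m + Δ(t)`, the marking `t` leads to. So every step of `N` is a run of `N'`,
while every step of `N'` is trivially one of `N`. -/

namespace PNet

variable {X T : Type} {N : PNet X T}

lemma fire_add {t : T} {m : X → ℕ} (hle : ∀ x, N.Pre t x ≤ m x) (d : X → ℕ) :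
    N.fire t (m + d) = N.fire t m + d := by
  funext x
  have := hle x
  simp only [fire, Pi.add_apply]
  omega

lemma Enabled.add {t : T} {m : X → ℕ} (h : N.Enabled t m) (d : X → ℕ) :
    N.Enabled t (m + d) :=
  ⟨h.1, fun x => (h.2 x).trans (Nat.le_add_right _ _)⟩

namespace FireSeq

lemma reflTransGen_step : ∀ {σ : List T} {m m' : X → ℕ},
    N.FireSeq m σ m' → Relation.ReflTransGen N.Step m m'
  | [], _, _, rfl => .refl
  | t :: _, _, _, ⟨hen, hrest⟩ => .head ⟨t, hen, rfl⟩ (reflTransGen_step hrest)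

lemma add_right (d : X → ℕ) : ∀ {σ : List T} {m m' : X → ℕ},
    N.FireSeq m σ m' → N.FireSeq (m + d) σ (m' + d)
  | [], _, _, rfl => rfl
  | _ :: _, _, _, ⟨hen, hrest⟩ => ⟨hen.add d, fire_add hen.2 d ▸ add_right d hrest⟩

lemma cast_eq_add_deltaSeq : ∀ {σ : List T} {m m' : X → ℕ},
    N.FireSeq m σ m' → ∀ x, (m' x : ℤ) = m x + N.deltaSeq σ x
  | [], _, _, rfl, x => by simp [deltaSeq]
  | _ :: _, _, _, ⟨hen, hrest⟩, x => by
    have hle := hen.2 x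
    rw [cast_eq_add_deltaSeq hrest x]
    simp only [deltaSeq, List.map_cons, List.sum_cons, fire, delta]
    push_cast [hle]
    ring

lemma removeTrans {t : T} : ∀ {σ : List T} {m m' : X → ℕ},
    t ∉ σ → N.FireSeq m σ m' → (N.removeTrans t).FireSeq m σ m'
  | [], _, _, _, rfl => rfl
  | _ :: _, _, _, hσ, ⟨⟨hu, hle⟩, hrest⟩ =>
    ⟨⟨⟨hu, Ne.symm (List.ne_of_not_mem_cons hσ)⟩, hle⟩,
      removeTrans (List.not_mem_of_not_mem_cons hσ) hrest⟩

end FireSeq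

lemma Step.of_removeTrans {t : T} {m m' : X → ℕ} (h : (N.removeTrans t).Step m m') :
    N.Step m m' :=
  let ⟨u, ⟨⟨hu, _⟩, hle⟩, hm'⟩ := h
  ⟨u, ⟨hu, hle⟩, hm'⟩

lemma RedundantTransition.reflTransGen_fire {t : T} {σ : List T}
    (hred : N.RedundantTransition t σ) {m : X → ℕ} (hle : ∀ x, N.Pre t x ≤ m x) :
    Relation.ReflTransGen (N.removeTrans t).Step m (N.fire t m) := by
  obtain ⟨-, hσt, hΔ, w, hw⟩ := hred
  have hm : N.Pre t + (m - N.Pre t) = m := add_tsub_cancel_of_le hle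
  have hw_add : w + (m - N.Pre t) = N.fire t m := by
    funext x
    have hδ := hw.cast_eq_add_deltaSeq x
    rw [hΔ] at hδ
    simp only [delta] at hδ
    have := hle x
    simp only [Pi.add_apply, Pi.sub_apply, fire]
    omega
  have hrun := hw.add_right (m - N.Pre t)
  rw [hm, hw_add] at hrun
  exact (hrun.removeTrans fun ht => (hσt t ht).2 rfl).reflTransGen_step

lemma RedundantTransition.step_reflTransGen_removeTrans {t : T} {σ : List T}
    (hred : N.RedundantTransition t σ) {m m' : X → ℕ} (h : N.Step m m') :
    Relation.ReflTransGen (N.removeTrans t).Step m m' := by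
  obtain ⟨u, ⟨hu, hle⟩, rfl⟩ := h
  by_cases hut : u = t
  · subst hut
    exact hred.reflTransGen_fire hle
  · exact .single ⟨u, ⟨⟨hu, hut⟩, hle⟩, rfl⟩

end PNet

/-- Removing a redundant transition `t` (witnessed by a firing
sequence `σ` over `T ∖ {t}` with `Δ(σ) = Δ(t)` that is firable from `Pre(t)`)
does not change the reachability set. -/
theorem removeRedundantTransition_reach {X T : Type} (N : PNet X T) (t : T) (σ : List T)
    (hred : N.RedundantTransition t σ) :
    N.R = (N.removeTrans t).R := by
  ext m
  exact ⟨Relation.reflTransGen_closed (fun _ _ => hred.step_reflTransGen_removeTrans) _ _,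
    Relation.ReflTransGen.mono (fun _ _ => PNet.Step.of_removeTrans) _ _⟩
end

section
/- Let N = (P, T, Pre, Post, m₀) be a marked Petri net and let p ∈ P be a redundant place with witnesses I ⊆ P ∖ {p}, v : I ∪ {p} → ℕ ∖ {0} and b ∈ ℕ. Then every reachable marking m ∈ R(N) satisfies v(p)·m(p) = Σ_{q∈I} v(q)·m(q) + b. -/
/-! The weighted token count `v(p)·m(p) - Σ_{q ∈ I} v(q)·m(q)` is an integer linear form in the
marking. Firing a transition adds its displacement to the marking, and condition (3) of
redundancy says exactly that the form vanishes on every displacement; so the form is constant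
on the reachability set, where it equals its initial value `b` by condition (1). -/

namespace PNet

variable {X T : Type}

theorem cast_fire_of_enabled {N : PNet X T} {t : T} {m : X → ℕ} (hen : N.Enabled t m) :
    (fun x => (N.fire t m x : ℤ)) = (fun x => (m x : ℤ)) + N.delta t := by
  funext x
  have := hen.2 x
  simp only [fire, delta, Pi.add_apply]
  omega

theorem map_eq_map_m0_of_mem_R (N : PNet X T) (L : (X → ℤ) →+ ℤ)
    (hL : ∀ t ∈ N.trans, L (N.delta t) = 0) {m : X → ℕ} (hm : m ∈ N.R) :
    L (fun x => (m x : ℤ)) = L (fun x => (N.m0 x : ℤ)) := by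
  induction hm with
  | refl => rfl
  | tail _ step ih =>
    obtain ⟨t, hen, rfl⟩ := step
    rw [cast_fire_of_enabled hen, map_add, hL t hen.1, add_zero, ih]

end PNet

def redundancyForm {X : Type} (p : X) (I : Finset X) (v : X → ℕ) : (X → ℤ) →+ ℤ where
  toFun f := v p * f p - ∑ q ∈ I, v q * f q
  map_zero' := by simp
  map_add' f g := by
    simp only [Pi.add_apply, mul_add, Finset.sum_add_distrib]
    ring

/-- Every reachable marking `m` of a net with a redundant place `p`
(witnessed by `I`, `v`, `b`) satisfies the marking equation
`v(p)·m(p) = Σ_{q ∈ I} v(q)·m(q) + b`. -/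
theorem redundantPlace_marking_equation {X T : Type} (N : PNet X T) (p : X)
    (I : Finset X) (v : X → ℕ) (b : ℕ) (hred : N.RedundantPlace p I v b) :
    ∀ m ∈ N.R, v p * m p = (∑ q ∈ I, v q * m q) + b := by
  obtain ⟨-, -, -, -, hm0, -, hdelta⟩ := hred
  intro m hm
  have hL : ∀ t ∈ N.trans, redundancyForm p I v (N.delta t) = 0 := fun t ht => by
    simp only [redundancyForm, AddMonoidHom.coe_mk, ZeroHom.coe_mk, PNet.delta]
    rw [hdelta t ht, sub_self]
  have hinv := N.map_eq_map_m0_of_mem_R _ hL hm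
  simp only [redundancyForm, AddMonoidHom.coe_mk, ZeroHom.coe_mk] at hinv
  zify
  linarith
end

section
/- Let N = (P, T, Pre, Post, m₀) be a marked Petri net, let p ∈ P be a redundant place with witnesses I ⊆ P ∖ {p}, v : I ∪ {p} → ℕ ∖ {0} and b ∈ ℕ, and let N' = (P ∖ {p}, T, Pre', Post', m₀') be the net obtained from N by removing p. Write k = v(p) and, for a marking m : P ∖ {p} → ℕ, ρ(m) = Σ_{q∈I} v(q)·m(q) + b. Then: (i) for every m ∈ R(N'), k divides ρ(m) and the marking on P extending m with p ↦ ρ(m)/k belongs to R(N); and (ii) for every m' ∈ R(N), the restriction of m' to P ∖ {p} belongs to R(N'). In particular, for every marking m : P ∖ {p} → ℕ, the extension of m by p ↦ ρ(m)/k belongs to R(N) if and only if m ∈ R(N'). -/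
/-! The weighted difference `v(p)·m(p) − Σ_{q∈I} v(q)·m(q)` is a place invariant of `N`:
condition (3) says no transition changes it, and by (1) it equals `b` on every reachable marking.
Given the invariant, condition (2) says that `p` never disables a transition enabled on the other
places, so every firing sequence of `N'` is one of `N`, with `p` carrying the value forced by the
invariant. Conversely, restricting to `P ∖ {p}` maps firings of `N` to firings of `N'`. -/

section Valuations

variable {X : Type}

theorem restrictTo_update_of_mem_valuationOn [DecidableEq X] {V : Set X} {m : X → ℕ} {p : X}
    (n : ℕ) (hm : m ∈ ValuationOn V) (hp : p ∉ V) :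
    restrictTo V (Function.update m p n) = m := by
  funext x
  by_cases hx : x ∈ V
  · have hxp : x ≠ p := fun h => hp (h ▸ hx)
    simp [restrictTo, hx, hxp]
  · simp [restrictTo, hx, hm x hx]

theorem update_restrictTo_diff_singleton [DecidableEq X] {V : Set X} {f : X → ℕ}
    (hf : f ∈ ValuationOn V) (p : X) :
    Function.update (restrictTo (V \ {p}) f) p (f p) = f := by
  funext x
  rcases eq_or_ne x p with rfl | hxp
  · simp
  · by_cases hx : x ∈ V <;> simp [restrictTo, hx, hxp, hf x]

end Valuations

namespace PNet

variable {X T : Type} {N : PNet X T} {t : T}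

theorem WF.m0_mem_valuationOn (hwf : N.WF) : N.m0 ∈ ValuationOn N.places :=
  hwf.2.2.1

theorem WF.pre_mem_valuationOn (hwf : N.WF) (ht : t ∈ N.trans) :
    N.Pre t ∈ ValuationOn N.places :=
  fun x hx => (hwf.2.2.2 t ht x hx).1

theorem WF.post_mem_valuationOn (hwf : N.WF) (ht : t ∈ N.trans) :
    N.Post t ∈ ValuationOn N.places :=
  fun x hx => (hwf.2.2.2 t ht x hx).2

section RemovePlace

variable {p : X}

theorem removePlace_pre_of_mem {x : X} (hx : x ∈ N.places \ {p}) :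
    (N.removePlace p).Pre t x = N.Pre t x :=
  Set.indicator_of_mem hx _

theorem Enabled.restrictTo_removePlace {m : X → ℕ} (hen : N.Enabled t m) :
    (N.removePlace p).Enabled t (restrictTo (N.places \ {p}) m) := by
  refine ⟨hen.1, fun x => ?_⟩
  by_cases hx : x ∈ N.places \ {p} <;> simp [removePlace, restrictTo, hx, hen.2 x]

theorem removePlace_fire_restrictTo (m : X → ℕ) :
    (N.removePlace p).fire t (restrictTo (N.places \ {p}) m) =
      restrictTo (N.places \ {p}) (N.fire t m) := by
  funext x
  by_cases hx : x ∈ N.places \ {p} <;> simp [removePlace, fire, restrictTo, hx]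

theorem restrictTo_mem_R_removePlace {m : X → ℕ} (hm : m ∈ N.R) :
    restrictTo (N.places \ {p}) m ∈ (N.removePlace p).R := by
  refine Relation.ReflTransGen.lift (restrictTo (N.places \ {p})) ?_ _ _ hm
  rintro m₁ _ ⟨t, hen, rfl⟩
  exact ⟨t, hen.restrictTo_removePlace, (removePlace_fire_restrictTo m₁).symm⟩

variable [DecidableEq X]

theorem Enabled.update_of_removePlace (hwf : N.WF) {m : X → ℕ} {n : ℕ}
    (hen : (N.removePlace p).Enabled t m) (hp : N.Pre t p ≤ n) :
    N.Enabled t (Function.update m p n) := by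
  refine ⟨hen.1, fun x => ?_⟩
  rcases eq_or_ne x p with rfl | hxp
  · simpa using hp
  by_cases hx : x ∈ N.places
  · simpa [hxp, removePlace_pre_of_mem ⟨hx, hxp⟩] using hen.2 x
  · simp [hwf.pre_mem_valuationOn hen.1 x hx]

theorem fire_update_eq_update_removePlace_fire (hwf : N.WF) (ht : t ∈ N.trans)
    (m : X → ℕ) (n : ℕ) :
    N.fire t (Function.update m p n) =
      Function.update ((N.removePlace p).fire t m) p (n - N.Pre t p + N.Post t p) := by
  funext x
  rcases eq_or_ne x p with rfl | hxp
  · simp [fire]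
  by_cases hx : x ∈ N.places
  · simp [fire, removePlace, restrictTo, hx, hxp]
  · simp [fire, removePlace, restrictTo, hx, hxp, hwf.pre_mem_valuationOn ht x hx,
      hwf.post_mem_valuationOn ht x hx]

end RemovePlace

section Invariant

variable (p : X) (I : Finset X) (v : X → ℕ)

def redundancyForm (m : X → ℕ) : ℤ :=
  v p * m p - ∑ q ∈ I, (v q : ℤ) * m q

theorem redundancyForm_fire {m : X → ℕ} (hen : N.Enabled t m) :
    redundancyForm p I v (N.fire t m) =
      redundancyForm p I v m - redundancyForm p I v (N.Pre t) +
        redundancyForm p I v (N.Post t) := by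
  have hcast : ∀ x, (N.fire t m x : ℤ) = m x - N.Pre t x + N.Post t x := fun x => by
    simp [fire, Nat.cast_sub (hen.2 x)]
  simp only [redundancyForm, hcast, mul_add, mul_sub, Finset.sum_add_distrib,
    Finset.sum_sub_distrib]
  ring

variable {p I v} {b : ℕ}

theorem RedundantPlace.redundancyForm_of_mem_R (hred : N.RedundantPlace p I v b) {m : X → ℕ}
    (hm : m ∈ N.R) : redundancyForm p I v m = b := by
  induction hm with
  | refl => exact hred.2.2.2.2.1.symm
  | tail _ hstep ih =>
    obtain ⟨t, hen, rfl⟩ := hstep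
    have hΔ : redundancyForm p I v (N.Post t) = redundancyForm p I v (N.Pre t) := by
      have := hred.2.2.2.2.2.2 t hen.1
      simp only [redundancyForm, mul_sub, Finset.sum_sub_distrib] at this ⊢
      linarith
    rw [redundancyForm_fire p I v hen, hΔ, ih]
    ring

theorem RedundantPlace.pre_le (hred : N.RedundantPlace p I v b) (ht : t ∈ N.trans)
    {m : X → ℕ} (hm : redundancyForm p I v m = b) (hI : ∀ q ∈ I, N.Pre t q ≤ m q) :
    N.Pre t p ≤ m p := by
  have hpre : redundancyForm p I v (N.Pre t) ≤ b := hred.2.2.2.2.2.1 t ht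
  have hsum : ∑ q ∈ I, (v q : ℤ) * N.Pre t q ≤ ∑ q ∈ I, (v q : ℤ) * m q := by
    gcongr with q hq
    exact_mod_cast hI q hq
  have hk : (0 : ℤ) < v p := by exact_mod_cast Nat.pos_of_ne_zero hred.2.2.1
  unfold redundancyForm at hm hpre
  exact_mod_cast le_of_mul_le_mul_left (by linarith : (v p : ℤ) * N.Pre t p ≤ v p * m p) hk

variable [DecidableEq X]

theorem RedundantPlace.exists_update_mem_R (hwf : N.WF) (hred : N.RedundantPlace p I v b)
    {m : X → ℕ} (hm : m ∈ (N.removePlace p).R) : ∃ n, Function.update m p n ∈ N.R := by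
  induction hm with
  | refl =>
    refine ⟨N.m0 p, ?_⟩
    rw [show (N.removePlace p).m0 = restrictTo (N.places \ {p}) N.m0 from rfl,
      update_restrictTo_diff_singleton hwf.m0_mem_valuationOn]
    exact Relation.ReflTransGen.refl
  | @tail m₁ _ _ hstep ih =>
    obtain ⟨n, hM⟩ := ih
    obtain ⟨t, hen, rfl⟩ := hstep
    have hI : ∀ q ∈ I, N.Pre t q ≤ Function.update m₁ p n q := fun q hq => by
      have hq : q ∈ N.places \ {p} := hred.2.1 hq
      rw [Function.update_of_ne (by simpa using hq.2), ← removePlace_pre_of_mem hq]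
      exact hen.2 q
    have hp : N.Pre t p ≤ n := by
      simpa using hred.pre_le hen.1 (hred.redundancyForm_of_mem_R hM) hI
    exact ⟨_, hM.tail ⟨t, hen.update_of_removePlace hwf hp,
      (fire_update_eq_update_removePlace_fire hwf hen.1 m₁ n).symm⟩⟩

theorem RedundantPlace.dvd_and_update_mem_R (hwf : N.WF) (hred : N.RedundantPlace p I v b)
    {m : X → ℕ} (hm : m ∈ (N.removePlace p).R) :
    v p ∣ ((∑ q ∈ I, v q * m q) + b) ∧
      Function.update m p (((∑ q ∈ I, v q * m q) + b) / v p) ∈ N.R := by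
  obtain ⟨n, hM⟩ := hred.exists_update_mem_R hwf hm
  have hform := hred.redundancyForm_of_mem_R hM
  have hpI : p ∉ I := fun hp => (hred.2.1 hp).2 rfl
  have hsum : ∑ q ∈ I, (v q : ℤ) * Function.update m p n q = ∑ q ∈ I, (v q : ℤ) * m q :=
    Finset.sum_congr rfl fun q hq => by rw [Function.update_of_ne (ne_of_mem_of_not_mem hq hpI)]
  have hn : v p * n = ∑ q ∈ I, v q * m q + b := by
    simp only [redundancyForm, Function.update_self, hsum] at hform
    exact_mod_cast (by linarith : (v p : ℤ) * n = ∑ q ∈ I, (v q : ℤ) * m q + b)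
  rw [← hn, Nat.mul_div_cancel_left _ (Nat.pos_of_ne_zero hred.2.2.1)]
  exact ⟨Dvd.intro n rfl, hM⟩

end Invariant

end PNet

/-- Removing a redundant place `p` (witnessed by `I`, `v`, `b`):
with `k = v(p)` and `ρ(m) = Σ_{q ∈ I} v(q)·m(q) + b`,
(i) every `m ∈ R(N')` satisfies `k ∣ ρ(m)` and its extension by `p ↦ ρ(m)/k` is in `R(N)`;
(ii) the restriction to `P ∖ {p}` of every `m' ∈ R(N)` is in `R(N')`; and in particular,
for every marking `m` on `P ∖ {p}`, the extension of `m` by `p ↦ ρ(m)/k` belongs to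
`R(N)` iff `m ∈ R(N')`. -/
theorem removeRedundantPlace_reach {X T : Type} [DecidableEq X] (N : PNet X T) (hwf : N.WF)
    (p : X) (I : Finset X) (v : X → ℕ) (b : ℕ) (hred : N.RedundantPlace p I v b) :
    (∀ m ∈ (N.removePlace p).R,
        v p ∣ ((∑ q ∈ I, v q * m q) + b) ∧
          Function.update m p (((∑ q ∈ I, v q * m q) + b) / v p) ∈ N.R) ∧
    (∀ m' ∈ N.R, restrictTo (N.places \ {p}) m' ∈ (N.removePlace p).R) ∧
    (∀ m ∈ ValuationOn (N.places \ {p}),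
        (Function.update m p (((∑ q ∈ I, v q * m q) + b) / v p) ∈ N.R
          ↔ m ∈ (N.removePlace p).R)) := by
  refine ⟨fun m hm => hred.dvd_and_update_mem_R hwf hm,
    fun m' hm' => PNet.restrictTo_mem_R_removePlace hm', fun m hm => ⟨fun hM => ?_,
      fun hm' => (hred.dvd_and_update_mem_R hwf hm').2⟩⟩
  rw [← restrictTo_update_of_mem_valuationOn _ hm (fun h => h.2 rfl)]
  exact PNet.restrictTo_mem_R_removePlace hM
end

section
/- Let N = (P, T, Pre, Post, m₀) be a marked Petri net, let p, q ∈ P be distinct places, and let N⁺ be the net obtained from N by adding a fresh place a with a = p ⊞ q (i.e., N⁺ has places P ∪ {a}, the same transitions, m₀⁺(a) = m₀(p) + m₀(q), Pre⁺(t)(a) = Pre(t)(p) + Pre(t)(q) and Post⁺(t)(a) = Post(t)(p) + Post(t)(q) for every t ∈ T, everything else unchanged). Then: (i) a firing sequence σ over T is firable from m₀ in N if and only if it is firable from m₀⁺ in N⁺; and (ii) every reachable marking m ∈ R(N⁺) satisfies m(a) = m(p) + m(q). -/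
/-- The net `N⁺` obtained from `N` by adding a fresh place `a` with `a = p ⊞ q`. -/
def PNet.addSumPlace {X T : Type} [DecidableEq X] (N : PNet X T) (p q a : X) : PNet X T where
  places := N.places ∪ {a}
  trans := N.trans
  Pre := fun t => Function.update (N.Pre t) a (N.Pre t p + N.Pre t q)
  Post := fun t => Function.update (N.Post t) a (N.Post t p + N.Post t q)
  m0 := Function.update N.m0 a (N.m0 p + N.m0 q)


/-! A marking `m` of `N` is simulated in `N⁺` by `sumExtend m p q a`, which puts `m p + m q`
tokens on the fresh place `a`. The pre- and post-conditions and the initial marking of `N⁺`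
are the `sumExtend`s of those of `N`, so firing commutes with `sumExtend`. Enabledness is
unchanged: `N` never consumes from `a`, which is not one of its places, and the new constraint
`Pre p + Pre q ≤ m p + m q` of `N⁺` at `a` follows from those at `p` and `q`. The invariant
`m a = m p + m q` of (ii) is preserved by every firing in any net where `a = p ⊞ q`. -/

namespace PNet

section SumExtend

variable {X : Type} [DecidableEq X] {p q a : X}

def sumExtend (f : X → ℕ) (p q a : X) : X → ℕ :=
  Function.update f a (f p + f q)

@[simp]
theorem sumExtend_apply_self (f : X → ℕ) : sumExtend f p q a a = f p + f q :=
  Function.update_self _ _ _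

@[simp]
theorem sumExtend_apply_of_ne (f : X → ℕ) {x : X} (hx : x ≠ a) : sumExtend f p q a x = f x :=
  Function.update_of_ne hx _ _

theorem sumExtend_le_sumExtend_iff (hpa : p ≠ a) (hqa : q ≠ a) {f g : X → ℕ} (hfa : f a = 0) :
    sumExtend f p q a ≤ sumExtend g p q a ↔ f ≤ g := by
  constructor
  · intro h x
    by_cases hx : x = a
    · simp [hx, hfa]
    · simpa [hx] using h x
  · intro h x
    by_cases hx : x = a
    · subst hx
      simpa [hpa, hqa] using add_le_add (h p) (h q)
    · simpa [hx] using h x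

theorem sumExtend_tsub_add {f m g : X → ℕ} (hf : f ≤ m) :
    sumExtend (m - f + g) p q a = sumExtend m p q a - sumExtend f p q a + sumExtend g p q a := by
  ext x
  by_cases hx : x = a
  · subst hx
    have hp : f p ≤ m p := hf p
    have hq : f q ≤ m q := hf q
    simp only [sumExtend_apply_self, Pi.add_apply, Pi.sub_apply]
    omega
  · simp [hx]

end SumExtend

variable {X T : Type}

theorem firable_nil (N : PNet X T) (m : X → ℕ) : N.Firable m [] :=
  ⟨m, rfl⟩

theorem firable_cons (N : PNet X T) (m : X → ℕ) (t : T) (σ : List T) :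
    N.Firable m (t :: σ) ↔ N.Enabled t m ∧ N.Firable (N.fire t m) σ :=
  exists_and_left

theorem firable_map_iff_of_simulation {Y : Type} (N : PNet X T) (N' : PNet Y T)
    (G : (X → ℕ) → (Y → ℕ)) (henabled : ∀ t m, N'.Enabled t (G m) ↔ N.Enabled t m)
    (hfire : ∀ t m, N.Enabled t m → N'.fire t (G m) = G (N.fire t m)) (σ : List T) (m : X → ℕ) :
    N'.Firable (G m) σ ↔ N.Firable m σ := by
  induction σ generalizing m with
  | nil => exact iff_of_true (firable_nil _ _) (firable_nil _ _)
  | cons t σ ih =>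
    rw [firable_cons, firable_cons, henabled]
    exact and_congr_right fun ht => hfire t m ht ▸ ih _

theorem IsSumPlace.apply_eq_add_of_mem_R {N : PNet X T} {a p q : X} (hsum : N.IsSumPlace a p q)
    {m : X → ℕ} (hm : m ∈ N.R) : m a = m p + m q := by
  induction hm with
  | refl => exact hsum.1
  | tail _ hstep ih =>
    obtain ⟨t, ⟨ht, hle⟩, rfl⟩ := hstep
    obtain ⟨hPre, hPost⟩ := hsum.2 t ht
    have := hle p
    have := hle q
    simp only [fire, hPre, hPost]
    omega

variable [DecidableEq X] {p q a : X}

theorem isSumPlace_addSumPlace (N : PNet X T) (hpa : p ≠ a) (hqa : q ≠ a) :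
    (N.addSumPlace p q a).IsSumPlace a p q :=
  ⟨by simp [addSumPlace, hpa, hqa],
    fun t _ => by simp [addSumPlace, hpa, hqa]⟩

theorem addSumPlace_enabled_iff {N : PNet X T} (hpa : p ≠ a) (hqa : q ≠ a)
    (hPre : ∀ t ∈ N.trans, N.Pre t a = 0) (t : T) (m : X → ℕ) :
    (N.addSumPlace p q a).Enabled t (sumExtend m p q a) ↔ N.Enabled t m := by
  refine and_congr_right fun ht => ?_
  exact sumExtend_le_sumExtend_iff hpa hqa (hPre t ht)

theorem addSumPlace_fire {N : PNet X T} {t : T} {m : X → ℕ} (ht : N.Enabled t m) :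
    (N.addSumPlace p q a).fire t (sumExtend m p q a) = sumExtend (N.fire t m) p q a :=
  (sumExtend_tsub_add ht.2).symm

end PNet

theorem addSumPlace_firable_and_invariant_general {X T : Type} [DecidableEq X] (N : PNet X T)
    (hwf : N.WF) (p q a : X)
    (hpP : p ∈ N.places) (hqP : q ∈ N.places) (ha : a ∉ N.places) :
    (∀ σ : List T, N.Firable N.m0 σ ↔
        (N.addSumPlace p q a).Firable (N.addSumPlace p q a).m0 σ) ∧
    (∀ m ∈ (N.addSumPlace p q a).R, m a = m p + m q) := by
  have hpa : p ≠ a := ne_of_mem_of_not_mem hpP ha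
  have hqa : q ≠ a := ne_of_mem_of_not_mem hqP ha
  have hPre : ∀ t ∈ N.trans, N.Pre t a = 0 := fun t ht => (hwf.2.2.2 t ht a ha).1
  refine ⟨fun σ => ?_, fun m hm => (N.isSumPlace_addSumPlace hpa hqa).apply_eq_add_of_mem_R hm⟩
  exact (PNet.firable_map_iff_of_simulation N _ (PNet.sumExtend · p q a)
    (PNet.addSumPlace_enabled_iff hpa hqa hPre) (fun _ _ => PNet.addSumPlace_fire) σ N.m0).symm

/-- Adding a fresh place `a = p ⊞ q`:
(i) a firing sequence is firable from `m₀` in `N` iff it is firable from `m₀⁺` in `N⁺`;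
(ii) every reachable marking `m` of `N⁺` satisfies `m(a) = m(p) + m(q)`. -/
theorem addSumPlace_firable_and_invariant {X T : Type} [DecidableEq X] (N : PNet X T)
    (hwf : N.WF) (p q a : X) (hpq : p ≠ q)
    (hpP : p ∈ N.places) (hqP : q ∈ N.places) (ha : a ∉ N.places) :
    (∀ σ : List T, N.Firable N.m0 σ ↔
        (N.addSumPlace p q a).Firable (N.addSumPlace p q a).m0 σ) ∧
    (∀ m ∈ (N.addSumPlace p q a).R, m a = m p + m q) :=
  addSumPlace_firable_and_invariant_general N hwf p q a hpP hqP ha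
end

section
/- Let N = (P, T, Pre, Post, m₀) be a marked Petri net with chain-agglomerable places p, q ∈ P, and let N' be their chain agglomeration with new place a. Then for every marking m : P ∖ {p, q} → ℕ and every x ∈ ℕ: if the marking on (P ∖ {p, q}) ∪ {a} extending m with a ↦ x belongs to R(N'), then the marking on P extending m with p ↦ x and q ↦ 0 belongs to R(N). -/
/-! A marking `m` of the agglomerated net is simulated in `N` by `unagglom a p q m`, which
carries the tokens of `a` on `p` and leaves `q` empty. Firing the chain transition `t` in the
agglomerated net changes nothing, and any other transition `u` is simulated by first firing `t`
`Pre u q` times and then `u`: as only `t` feeds `q`, the place `q` is empty again afterwards. -/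

open Function

theorem restrictTo_diff_apply_of_notMem {X : Type} {P A : Set X} {f : X → ℕ}
    (hf : ∀ x, x ∉ P → f x = 0) {r : X} (hr : r ∉ A) : restrictTo (P \ A) f r = f r := by
  by_cases hrP : r ∈ P
  · exact Set.indicator_of_mem (Set.mem_sdiff_of_mem hrP hr) f
  · rw [restrictTo, Set.indicator_of_notMem (fun h => hrP h.1), hf r hrP]

namespace PNet

variable {X T : Type} {N : PNet X T}

theorem fire_mem_R {m : X → ℕ} {t : T} (hm : m ∈ N.R) (ht : N.Enabled t m) :
    N.fire t m ∈ N.R :=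
  Relation.ReflTransGen.tail hm ⟨t, ht, rfl⟩

section MovesToken

variable [DecidableEq X]

def MovesToken (N : PNet X T) (t : T) (p q : X) : Prop :=
  t ∈ N.trans ∧ N.Pre t = Pi.single p 1 ∧ N.Post t = Pi.single q 1

variable {t : T} {p q : X}

theorem ChainAgglomerable.movesToken (h : N.ChainAgglomerable p q t) : N.MovesToken t p q := by
  obtain ⟨-, -, -, ht, hPre, hPre_ne, hPost, hPost_ne, -⟩ := h
  refine ⟨ht, funext fun r => ?_, funext fun r => ?_⟩
  · rcases eq_or_ne r p with rfl | hr
    · simp [hPre]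
    · simp [hPre_ne r hr, hr]
  · rcases eq_or_ne r q with rfl | hr
    · simp [hPost]
    · simp [hPost_ne r hr, hr]

theorem MovesToken.enabled_iff (h : N.MovesToken t p q) {M : X → ℕ} :
    N.Enabled t M ↔ 1 ≤ M p := by
  refine ⟨fun he => by simpa [h.2.1] using he.2 p, fun hM => ⟨h.1, fun r => ?_⟩⟩
  rcases eq_or_ne r p with rfl | hr
  · simpa [h.2.1] using hM
  · simp [h.2.1, hr]

theorem MovesToken.fire_eq (h : N.MovesToken t p q) (hpq : p ≠ q) (M : X → ℕ) :
    N.fire t M = update (update M p (M p - 1)) q (M q + 1) := by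
  funext r
  simp only [fire, h.2.1, h.2.2, Pi.single_apply, update_apply]
  split_ifs <;> simp_all

theorem MovesToken.transfer_mem_R (h : N.MovesToken t p q) (hpq : p ≠ q) {M : X → ℕ}
    (hM : M ∈ N.R) : ∀ k ≤ M p, update (update M p (M p - k)) q (M q + k) ∈ N.R
  | 0, _ => by simpa using hM
  | k + 1, hk => by
    have hfire := fire_mem_R (h.transfer_mem_R hpq hM k (by omega))
      ((h.enabled_iff).2 (by simp [update_of_ne hpq]; omega))
    convert hfire using 1
    rw [h.fire_eq hpq]
    funext r
    simp only [update_apply]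
    split_ifs <;> simp_all <;> omega

end MovesToken

section Agglom

variable [DecidableEq X] {A : Finset X} {a : X} {u : T} {r : X}

theorem agglom_Pre_of_notMem (hwf : N.WF) (hu : u ∈ N.trans) (hrA : r ∉ A) (hra : r ≠ a) :
    (N.agglom A a).Pre u r = N.Pre u r := by
  simp only [agglom, update_of_ne hra]
  exact restrictTo_diff_apply_of_notMem (fun x hx => (hwf.2.2.2 u hu x hx).1) hrA

theorem agglom_Post_of_notMem (hwf : N.WF) (hu : u ∈ N.trans) (hrA : r ∉ A) (hra : r ≠ a) :
    (N.agglom A a).Post u r = N.Post u r := by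
  simp only [agglom, update_of_ne hra]
  exact restrictTo_diff_apply_of_notMem (fun x hx => (hwf.2.2.2 u hu x hx).2) hrA

theorem agglom_m0_of_notMem (hwf : N.WF) (hrA : r ∉ A) (hra : r ≠ a) :
    (N.agglom A a).m0 r = N.m0 r := by
  simp only [agglom, update_of_ne hra]
  exact restrictTo_diff_apply_of_notMem hwf.2.2.1 hrA

theorem agglom_pair_Pre_self {p q : X} (hpq : p ≠ q) (u : T) :
    (N.agglom {p, q} a).Pre u a = N.Pre u p + N.Pre u q := by
  simp [agglom, Finset.sum_pair hpq]

theorem agglom_pair_Post_self {p q : X} (hpq : p ≠ q) (u : T) :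
    (N.agglom {p, q} a).Post u a = N.Post u p + N.Post u q := by
  simp [agglom, Finset.sum_pair hpq]

theorem agglom_pair_m0_self {p q : X} (hpq : p ≠ q) :
    (N.agglom {p, q} a).m0 a = N.m0 p + N.m0 q := by
  simp [agglom, Finset.sum_pair hpq]

end Agglom

section Unagglom

variable [DecidableEq X] {p q a r : X} {m : X → ℕ}

def unagglom (a p q : X) (m : X → ℕ) : X → ℕ :=
  update (update (update m a 0) p (m a)) q 0

@[simp] theorem unagglom_apply_left (hpq : p ≠ q) : unagglom a p q m p = m a := by
  simp [unagglom, update_of_ne hpq]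

@[simp] theorem unagglom_apply_right : unagglom a p q m q = 0 := by
  simp [unagglom]

@[simp] theorem unagglom_apply_self (hpa : p ≠ a) (hqa : q ≠ a) : unagglom a p q m a = 0 := by
  simp [unagglom, update_of_ne hpa.symm, update_of_ne hqa.symm]

theorem unagglom_apply_of_ne (hrp : r ≠ p) (hrq : r ≠ q) (hra : r ≠ a) :
    unagglom a p q m r = m r := by
  simp [unagglom, update_of_ne hrp, update_of_ne hrq, update_of_ne hra]

end Unagglom

section ChainAgglomeration

variable [DecidableEq X] {p q a : X} {t : T}

theorem ChainAgglomerable.agglom_Pre_eq (hca : N.ChainAgglomerable p q t) :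
    (N.agglom {p, q} a).Pre t = Pi.single a 1 := by
  obtain ⟨-, -, hpq, -, hPre, hPre_ne, -⟩ := hca
  funext r
  rcases eq_or_ne r a with rfl | hra
  · simp [agglom_pair_Pre_self hpq, hPre, hPre_ne q hpq.symm]
  · rcases eq_or_ne r p with rfl | hrp
    · simp [agglom, restrictTo, hra]
    · simp [agglom, restrictTo, hra, hPre_ne r hrp]

theorem ChainAgglomerable.agglom_Post_eq (hca : N.ChainAgglomerable p q t) :
    (N.agglom {p, q} a).Post t = Pi.single a 1 := by
  obtain ⟨-, -, hpq, -, -, -, hPost, hPost_ne, -⟩ := hca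
  funext r
  rcases eq_or_ne r a with rfl | hra
  · simp [agglom_pair_Post_self hpq, hPost, hPost_ne p hpq]
  · rcases eq_or_ne r q with rfl | hrq
    · simp [agglom, restrictTo, hra]
    · simp [agglom, restrictTo, hra, hPost_ne r hrq]

theorem ChainAgglomerable.agglom_fire_self (hca : N.ChainAgglomerable p q t) {m : X → ℕ}
    (hen : (N.agglom {p, q} a).Enabled t m) : (N.agglom {p, q} a).fire t m = m := by
  have hma : 1 ≤ m a := by simpa [hca.agglom_Pre_eq] using hen.2 a
  funext r
  simp only [fire, hca.agglom_Pre_eq, hca.agglom_Post_eq, Pi.single_apply]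
  split_ifs with hra
  · subst hra; omega
  · simp

theorem ChainAgglomerable.unagglom_agglom_m0 (hwf : N.WF) (hca : N.ChainAgglomerable p q t)
    (ha : a ∉ N.places) : unagglom a p q (N.agglom {p, q} a).m0 = N.m0 := by
  obtain ⟨hp, hq, hpq, -, -, -, -, -, -, hm0q⟩ := hca
  have hpa : p ≠ a := ne_of_mem_of_not_mem hp ha
  have hqa : q ≠ a := ne_of_mem_of_not_mem hq ha
  funext r
  by_cases hrq : r = q
  · simp [hrq, hm0q]
  by_cases hrp : r = p
  · simp [hrp, hpq, agglom_pair_m0_self hpq, hm0q]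
  by_cases hra : r = a
  · simp [hra, hpa, hqa, hwf.2.2.1 a ha]
  rw [unagglom_apply_of_ne hrp hrq hra, agglom_m0_of_notMem hwf (by simp [hrp, hrq]) hra]

theorem ChainAgglomerable.enabled_of_agglom_enabled (hwf : N.WF)
    (hca : N.ChainAgglomerable p q t) (ha : a ∉ N.places) {u : T} {m : X → ℕ}
    (hen : (N.agglom {p, q} a).Enabled u m) :
    N.Enabled u (update (update (unagglom a p q m) p (m a - N.Pre u q)) q (N.Pre u q)) := by
  obtain ⟨hu, hen⟩ := hen
  have hu : u ∈ N.trans := hu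
  obtain ⟨-, -, hpq, -⟩ := hca
  refine ⟨hu, fun r => ?_⟩
  by_cases hrq : r = q
  · simp [hrq]
  by_cases hrp : r = p
  · have hk := hen a
    rw [agglom_pair_Pre_self hpq] at hk
    simp only [hrp, update_of_ne hpq, update_self]
    omega
  by_cases hra : r = a
  · simp [hra, (hwf.2.2.2 u hu a ha).1]
  have hrA : r ∉ ({p, q} : Finset X) := by simp [hrp, hrq]
  simpa [hrp, hrq, unagglom_apply_of_ne hrp hrq hra, agglom_Pre_of_notMem hwf hu hrA hra]
    using hen r

theorem ChainAgglomerable.fire_eq_unagglom_fire (hwf : N.WF) (hca : N.ChainAgglomerable p q t)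
    (ha : a ∉ N.places) {u : T} (hu : u ∈ N.trans) (hut : u ≠ t) {m : X → ℕ}
    (hk : N.Pre u p + N.Pre u q ≤ m a) :
    N.fire u (update (update (unagglom a p q m) p (m a - N.Pre u q)) q (N.Pre u q)) =
      unagglom a p q ((N.agglom {p, q} a).fire u m) := by
  obtain ⟨hp, hq, hpq, -, -, -, -, -, hPost_q, -⟩ := hca
  have hpa : p ≠ a := ne_of_mem_of_not_mem hp ha
  have hqa : q ≠ a := ne_of_mem_of_not_mem hq ha
  have hPost_uq : N.Post u q = 0 := hPost_q u hu hut
  funext r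
  by_cases hrq : r = q
  · simp [hrq, fire, hPost_uq]
  by_cases hrp : r = p
  · simp only [hrp, fire, update_of_ne hpq, update_self, unagglom_apply_left hpq,
      agglom_pair_Pre_self hpq, agglom_pair_Post_self hpq, hPost_uq]
    omega
  by_cases hra : r = a
  · simp [hra, hpa, hqa, hpa.symm, hqa.symm, fire, hwf.2.2.2 u hu a ha]
  have hrA : r ∉ ({p, q} : Finset X) := by simp [hrp, hrq]
  simp only [fire, update_of_ne hrp, update_of_ne hrq, unagglom_apply_of_ne hrp hrq hra,
    agglom_Pre_of_notMem hwf hu hrA hra, agglom_Post_of_notMem hwf hu hrA hra]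

theorem ChainAgglomerable.unagglom_fire_mem_R (hwf : N.WF) (hca : N.ChainAgglomerable p q t)
    (ha : a ∉ N.places) {u : T} (hut : u ≠ t) {m : X → ℕ}
    (hen : (N.agglom {p, q} a).Enabled u m) (hm : unagglom a p q m ∈ N.R) :
    unagglom a p q ((N.agglom {p, q} a).fire u m) ∈ N.R := by
  have hpq : p ≠ q := hca.2.2.1
  have hk : N.Pre u p + N.Pre u q ≤ m a := by
    simpa [agglom_pair_Pre_self hpq] using hen.2 a
  have hloaded := hca.movesToken.transfer_mem_R hpq hm (N.Pre u q) (by simp [hpq]; omega)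
  simp only [unagglom_apply_left hpq, unagglom_apply_right, zero_add] at hloaded
  rw [← hca.fire_eq_unagglom_fire hwf ha hen.1 hut hk]
  exact fire_mem_R hloaded (hca.enabled_of_agglom_enabled hwf ha hen)

theorem ChainAgglomerable.unagglom_mem_R (hwf : N.WF) (hca : N.ChainAgglomerable p q t)
    (ha : a ∉ N.places) {m : X → ℕ} (hm : m ∈ (N.agglom {p, q} a).R) :
    unagglom a p q m ∈ N.R := by
  induction hm with
  | refl => rw [hca.unagglom_agglom_m0 hwf ha]; exact Relation.ReflTransGen.refl
  | tail _ hstep ih =>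
    obtain ⟨u, hen, rfl⟩ := hstep
    by_cases hut : u = t
    · subst hut; rwa [hca.agglom_fire_self hen]
    · exact hca.unagglom_fire_mem_R hwf ha hut hen ih

end ChainAgglomeration

end PNet

/-- Chain agglomeration of `p` and `q` as the fresh place `a`:
if the marking extending `m` (a marking on `P ∖ {p, q}`) with `a ↦ x` is reachable
in the agglomerated net `N'`, then the marking extending `m` with `p ↦ x` and `q ↦ 0`
is reachable in `N`. -/
theorem chainAgglomeration_reach_back {X T : Type} [DecidableEq X] (N : PNet X T)
    (hwf : N.WF) (p q : X) (t : T) (hca : N.ChainAgglomerable p q t)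
    (a : X) (ha : a ∉ N.places)
    (m : X → ℕ) (hm : m ∈ ValuationOn (N.places \ {p, q})) (x : ℕ) :
    Function.update m a x ∈ (N.agglom {p, q} a).R →
      Function.update (Function.update m p x) q 0 ∈ N.R := by
  intro hreach
  have hma : m a = 0 := hm a fun h => ha h.1
  convert hca.unagglom_mem_R hwf ha hreach using 1
  simp [PNet.unagglom, ← hma]
end

section
/- Let N = (P, T, Pre, Post, m₀) be a marked Petri net with chain-agglomerable places p, q ∈ P (witnessed by transition t). Then for every marking m : P ∖ {p, q} → ℕ and all x, u, v ∈ ℕ with u + v = x: if the marking on P extending m with p ↦ x and q ↦ 0 belongs to R(N), then the marking on P extending m with p ↦ u and q ↦ v belongs to R(N). -/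
namespace PNet

variable {X T : Type} [DecidableEq X] {N : PNet X T} {p q : X} {t : T}

theorem ChainAgglomerable.pre_eq (h : N.ChainAgglomerable p q t) : N.Pre t = Pi.single p 1 := by
  obtain ⟨-, -, -, -, hp, hr, -⟩ := h
  funext r
  by_cases hrp : r = p
  · subst hrp; simpa using hp
  · simpa [hrp] using hr r hrp

theorem ChainAgglomerable.post_eq (h : N.ChainAgglomerable p q t) :
    N.Post t = Pi.single q 1 := by
  obtain ⟨-, -, -, -, -, -, hq, hr, -⟩ := h
  funext r
  by_cases hrq : r = q
  · subst hrq; simpa using hq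
  · simpa [hrq] using hr r hrq

theorem ChainAgglomerable.step_update (h : N.ChainAgglomerable p q t) (m : X → ℕ) (u v : ℕ) :
    N.Step (Function.update (Function.update m p (u + 1)) q v)
      (Function.update (Function.update m p u) q (v + 1)) := by
  obtain ⟨-, -, hpq, ht, -⟩ := id h
  refine ⟨t, ⟨ht, fun r => ?_⟩, ?_⟩
  · rw [h.pre_eq]
    by_cases hrp : r = p
    · subst hrp; simp [Function.update_of_ne hpq]
    · simp [hrp]
  · funext r
    simp only [fire, h.pre_eq, h.post_eq, Pi.single_apply, Function.update_apply]
    split_ifs <;> grind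

end PNet

theorem chainAgglomerable_distribute_general {X T : Type} [DecidableEq X] (N : PNet X T)
    (p q : X) (t : T) (hca : N.ChainAgglomerable p q t)
    (m : X → ℕ)
    (x u v : ℕ) (huv : u + v = x) :
    Function.update (Function.update m p x) q 0 ∈ N.R →
      Function.update (Function.update m p u) q v ∈ N.R := by
  intro hx
  induction v generalizing u with
  | zero => simpa [← huv] using hx
  | succ v ih => exact (ih (u + 1) (by omega)).tail (hca.step_update m u v)

/-- With chain-agglomerable places `p`, `q` (witnessed by `t`),
the tokens of `p` can be distributed freely between `p` and `q`: if the marking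
extending `m` with `p ↦ x` and `q ↦ 0` is reachable and `u + v = x`, then the
marking extending `m` with `p ↦ u` and `q ↦ v` is reachable. -/
theorem chainAgglomerable_distribute {X T : Type} [DecidableEq X] (N : PNet X T)
    (p q : X) (t : T) (hca : N.ChainAgglomerable p q t)
    (m : X → ℕ) (hm : m ∈ ValuationOn (N.places \ {p, q}))
    (x u v : ℕ) (huv : u + v = x) :
    Function.update (Function.update m p x) q 0 ∈ N.R →
      Function.update (Function.update m p u) q v ∈ N.R :=
  chainAgglomerable_distribute_general N p q t hca m x u v huv
end

section
/- Let N = (P, T, Pre, Post, m₀) be a marked Petri net with chain-agglomerable places p, q ∈ P, and let N' be their chain agglomeration with new place a. Then for every marking m : P ∖ {p, q} → ℕ and all x, y ∈ ℕ: the marking on P extending m with p ↦ x and q ↦ y belongs to R(N) if and only if the marking on (P ∖ {p, q}) ∪ {a} extending m with a ↦ x + y belongs to R(N'). -/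
/-! Pooling the tokens of `p` and `q` on `a` maps markings of `N` to markings of `N'` and
simulates every firing, which gives the forward direction. Conversely, `t` only moves tokens
from `p` to `q` and no other transition feeds `q`, so every marking reachable in `N'` lifts to
the marking of `N` that keeps all the tokens of `a` on `p`: a transition `u ≠ t` of `N'` is
mimicked by first firing `t` to put the `Pre(u)(q)` tokens that `u` needs on `q`, then `u`.
From that lift, firing `t` reaches every split of the tokens of `a` between `p` and `q`. -/

open Function

noncomputable def mergeMarking {X : Type} [DecidableEq X] (V : Set X) (p q a : X)
    (f : X → ℕ) : X → ℕ :=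
  update (restrictTo (V \ {p, q}) f) a (f p + f q)

noncomputable def splitMarking {X : Type} [DecidableEq X] (V : Set X) (p q : X)
    (f : X → ℕ) (x y : ℕ) : X → ℕ :=
  update (update (restrictTo (V \ {p, q}) f) p x) q y

section Markings

variable {X : Type} [DecidableEq X] {V : Set X} {p q a : X}

lemma mergeMarking_mono {f g : X → ℕ} (h : f ≤ g) :
    mergeMarking V p q a f ≤ mergeMarking V p q a g := by
  intro r
  have hp : f p ≤ g p := h p
  have hq : f q ≤ g q := h q
  have hr : f r ≤ g r := h r
  classical
  simp only [mergeMarking, update_apply, restrictTo, Set.indicator_apply]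
  split_ifs <;> omega

lemma mergeMarking_tsub_add {f g h : X → ℕ} (hgf : g ≤ f) :
    mergeMarking V p q a (f - g + h) =
      mergeMarking V p q a f - mergeMarking V p q a g + mergeMarking V p q a h := by
  funext r
  have hp : g p ≤ f p := hgf p
  have hq : g q ≤ f q := hgf q
  classical
  simp only [mergeMarking, update_apply, restrictTo, Set.indicator_apply, Pi.add_apply,
    Pi.sub_apply]
  split_ifs <;> omega

lemma splitMarking_mono {f g : X → ℕ} {x x' y y' : ℕ} (h : f ≤ g) (hx : x ≤ x') (hy : y ≤ y') :
    splitMarking V p q f x y ≤ splitMarking V p q g x' y' := by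
  intro r
  have hr : f r ≤ g r := h r
  classical
  simp only [splitMarking, update_apply, restrictTo, Set.indicator_apply]
  split_ifs <;> omega

lemma splitMarking_tsub_add (f g h : X → ℕ) (x x₁ x₂ y y₁ y₂ : ℕ) :
    splitMarking V p q (f - g + h) (x - x₁ + x₂) (y - y₁ + y₂) =
      splitMarking V p q f x y - splitMarking V p q g x₁ y₁ + splitMarking V p q h x₂ y₂ := by
  funext r
  classical
  simp only [splitMarking, update_apply, restrictTo, Set.indicator_apply, Pi.add_apply,
    Pi.sub_apply]
  split_ifs <;> rfl

lemma splitMarking_mergeMarking {f : X → ℕ} (hf : f ∈ ValuationOn V) (ha : a ∉ V) :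
    splitMarking V p q (mergeMarking V p q a f) (f p) (f q) = f := by
  funext r
  classical
  simp only [splitMarking, mergeMarking, update_apply, restrictTo, Set.indicator_apply]
  split_ifs <;> simp_all [ValuationOn]

lemma mergeMarking_update_update {m : X → ℕ} (hpq : p ≠ q) (hm : m ∈ ValuationOn (V \ {p, q}))
    (x y : ℕ) : mergeMarking V p q a (update (update m p x) q y) = update m a (x + y) := by
  funext r
  classical
  simp only [mergeMarking, update_apply, restrictTo, Set.indicator_apply]
  split_ifs <;> simp_all [ValuationOn]

lemma splitMarking_update {m : X → ℕ} (ha : a ∉ V) (hm : m ∈ ValuationOn (V \ {p, q}))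
    (z x y : ℕ) : splitMarking V p q (update m a z) x y = update (update m p x) q y := by
  funext r
  classical
  simp only [splitMarking, update_apply, restrictTo, Set.indicator_apply]
  split_ifs <;> simp_all [ValuationOn]

lemma mergeMarking_apply_self (f : X → ℕ) : mergeMarking V p q a f a = f p + f q :=
  update_self ..

lemma mergeMarking_single_left_eq_right (hpq : p ≠ q) (n : ℕ) :
    mergeMarking V p q a (Pi.single p n) = mergeMarking V p q a (Pi.single q n) := by
  classical
  funext r
  simp only [mergeMarking, update_apply, restrictTo, Set.indicator_apply, Pi.single_apply]
  split_ifs <;> simp_all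

end Markings

namespace PNet

variable {X T : Type}

lemma fire_eq (N : PNet X T) (t : T) (m : X → ℕ) : N.fire t m = m - N.Pre t + N.Post t := rfl

section Agglom

variable [DecidableEq X] (N : PNet X T) {p q : X} (a : X)

lemma agglom_pair_Pre (hpq : p ≠ q) (u : T) :
    (N.agglom {p, q} a).Pre u = mergeMarking N.places p q a (N.Pre u) := by
  simp [agglom, mergeMarking, Finset.sum_pair hpq]

lemma agglom_pair_Post (hpq : p ≠ q) (u : T) :
    (N.agglom {p, q} a).Post u = mergeMarking N.places p q a (N.Post u) := by
  simp [agglom, mergeMarking, Finset.sum_pair hpq]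

lemma agglom_pair_m0 (hpq : p ≠ q) :
    (N.agglom {p, q} a).m0 = mergeMarking N.places p q a N.m0 := by
  simp [agglom, mergeMarking, Finset.sum_pair hpq]

lemma Step.agglom_pair (hpq : p ≠ q) {M M' : X → ℕ} (h : N.Step M M') :
    (N.agglom {p, q} a).Step (mergeMarking N.places p q a M)
      (mergeMarking N.places p q a M') := by
  obtain ⟨u, ⟨hu, hle⟩, rfl⟩ := h
  refine ⟨u, ⟨hu, ?_⟩, ?_⟩
  · rw [agglom_pair_Pre N a hpq]
    exact mergeMarking_mono hle
  · rw [fire_eq, fire_eq, agglom_pair_Pre N a hpq, agglom_pair_Post N a hpq,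
      mergeMarking_tsub_add hle]

lemma mergeMarking_mem_R_agglom_pair (hpq : p ≠ q) {M : X → ℕ} (hM : M ∈ N.R) :
    mergeMarking N.places p q a M ∈ (N.agglom {p, q} a).R := by
  show Relation.ReflTransGen _ _ _
  rw [agglom_pair_m0 N a hpq]
  exact Relation.ReflTransGen.lift _ (fun _ _ h => Step.agglom_pair N a hpq h) _ _ hM

end Agglom

lemma reflTransGen_move_tokens [DecidableEq X] {N : PNet X T} {p q : X} {t : T}
    (ht : t ∈ N.trans) (hpq : p ≠ q) (hpre : N.Pre t = Pi.single p 1)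
    (hpost : N.Post t = Pi.single q 1) (M : X → ℕ) (x y k : ℕ) :
    Relation.ReflTransGen N.Step (update (update M p (x + k)) q y)
      (update (update M p x) q (y + k)) := by
  induction k generalizing y with
  | zero => exact .refl
  | succ k ih =>
    have hstep : N.Step (update (update M p (x + (k + 1))) q y)
        (update (update M p (x + k)) q (y + 1)) := by
      refine ⟨t, ⟨ht, fun r => ?_⟩, funext fun r => ?_⟩ <;>
      · simp only [fire_eq, hpre, hpost, Pi.add_apply, Pi.sub_apply, Pi.single_apply,
          update_apply]
        split_ifs <;> simp_all <;> omega
    simpa only [Nat.add_right_comm y 1 k, Nat.add_assoc y] using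
      Relation.ReflTransGen.head hstep (ih (y + 1))

namespace ChainAgglomerable

variable {N : PNet X T} {p q : X} {t : T}

lemma ne (hca : N.ChainAgglomerable p q t) : p ≠ q := hca.2.2.1

variable [DecidableEq X]

lemma pre_eq_s9 (hca : N.ChainAgglomerable p q t) : N.Pre t = Pi.single p 1 := by
  funext r
  rcases eq_or_ne r p with rfl | hr
  · simpa using hca.2.2.2.2.1
  · simpa [hr] using hca.2.2.2.2.2.1 r hr

lemma post_eq_s9 (hca : N.ChainAgglomerable p q t) : N.Post t = Pi.single q 1 := by
  funext r
  rcases eq_or_ne r q with rfl | hr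
  · simpa using hca.2.2.2.2.2.2.1
  · simpa [hr] using hca.2.2.2.2.2.2.2.1 r hr

lemma reflTransGen_splitMarking (hca : N.ChainAgglomerable p q t) (V : Set X) (M : X → ℕ)
    (x y : ℕ) :
    Relation.ReflTransGen N.Step (splitMarking V p q M (x + y) 0) (splitMarking V p q M x y) := by
  have h := reflTransGen_move_tokens hca.2.2.2.1 hca.ne hca.pre_eq_s9 hca.post_eq_s9
    (restrictTo (V \ {p, q}) M) x 0 y
  rwa [Nat.zero_add] at h

lemma agglom_pair_Pre_eq_Post (hca : N.ChainAgglomerable p q t) (a : X) :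
    (N.agglom {p, q} a).Pre t = (N.agglom {p, q} a).Post t := by
  rw [agglom_pair_Pre N a hca.ne, agglom_pair_Post N a hca.ne, hca.pre_eq_s9, hca.post_eq_s9,
    mergeMarking_single_left_eq_right hca.ne]

end ChainAgglomerable

section Lift

variable [DecidableEq X] {N : PNet X T} {p q a : X} {t u : T}

lemma splitMarking_agglom_pair_Pre (hwf : N.WF) (hpq : p ≠ q) (ha : a ∉ N.places)
    (hu : u ∈ N.trans) :
    splitMarking N.places p q ((N.agglom {p, q} a).Pre u) (N.Pre u p) (N.Pre u q) = N.Pre u := by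
  rw [agglom_pair_Pre N a hpq]
  exact splitMarking_mergeMarking (fun r hr => (hwf.2.2.2 u hu r hr).1) ha

lemma splitMarking_agglom_pair_Post (hwf : N.WF) (hpq : p ≠ q) (ha : a ∉ N.places)
    (hu : u ∈ N.trans) :
    splitMarking N.places p q ((N.agglom {p, q} a).Post u) (N.Post u p) (N.Post u q) =
      N.Post u := by
  rw [agglom_pair_Post N a hpq]
  exact splitMarking_mergeMarking (fun r hr => (hwf.2.2.2 u hu r hr).2) ha

lemma fire_splitMarking (hwf : N.WF) (hpq : p ≠ q) (ha : a ∉ N.places) (hu : u ∈ N.trans)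
    (M : X → ℕ) (x y : ℕ) :
    N.fire u (splitMarking N.places p q M x y) =
      splitMarking N.places p q ((N.agglom {p, q} a).fire u M)
        (x - N.Pre u p + N.Post u p) (y - N.Pre u q + N.Post u q) := by
  conv_lhs => rw [fire_eq, ← splitMarking_agglom_pair_Pre hwf hpq ha hu,
    ← splitMarking_agglom_pair_Post hwf hpq ha hu]
  exact (splitMarking_tsub_add ..).symm

lemma Step.splitMarking_reflTransGen (hwf : N.WF) (hca : N.ChainAgglomerable p q t)
    (ha : a ∉ N.places) {M M' : X → ℕ} (h : (N.agglom {p, q} a).Step M M') :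
    Relation.ReflTransGen N.Step (splitMarking N.places p q M (M a) 0)
      (splitMarking N.places p q M' (M' a) 0) := by
  have ⟨_, _, hpq, _, _, _, _, _, hfeed, _⟩ := hca
  obtain ⟨u, ⟨hu, hle⟩, rfl⟩ := h
  rcases eq_or_ne u t with rfl | hut
  · rw [fire_eq, ← hca.agglom_pair_Pre_eq_Post, tsub_add_cancel_of_le hle]
  have hq : N.Post u q = 0 := hfeed u hu hut
  have hPre_le : N.Pre u p + N.Pre u q ≤ M a := by
    simpa only [agglom_pair_Pre N a hpq, mergeMarking_apply_self] using hle a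
  have hfa : (N.agglom {p, q} a).fire u M a = M a - N.Pre u q - N.Pre u p + N.Post u p := by
    simp only [fire_eq, Pi.add_apply, Pi.sub_apply, agglom_pair_Pre N a hpq,
      agglom_pair_Post N a hpq, mergeMarking_apply_self, hq]
    omega
  have hmove := hca.reflTransGen_splitMarking N.places M (M a - N.Pre u q) (N.Pre u q)
  rw [Nat.sub_add_cancel (by omega)] at hmove
  have hen : N.Pre u ≤ splitMarking N.places p q M (M a - N.Pre u q) (N.Pre u q) :=
    (splitMarking_agglom_pair_Pre hwf hpq ha hu).symm.trans_le
      (splitMarking_mono hle (by omega) le_rfl)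
  have hfire := fire_splitMarking hwf hpq ha hu M (M a - N.Pre u q) (N.Pre u q)
  rw [hq, Nat.sub_self, ← hfa] at hfire
  exact hmove.tail ⟨u, ⟨hu, hen⟩, hfire.symm⟩

lemma splitMarking_mem_R_of_mem_R_agglom_pair (hwf : N.WF) (hca : N.ChainAgglomerable p q t)
    (ha : a ∉ N.places) {M : X → ℕ} (hM : M ∈ (N.agglom {p, q} a).R) :
    splitMarking N.places p q M (M a) 0 ∈ N.R := by
  have ⟨_, _, hpq, _, _, _, _, _, _, hq0⟩ := hca
  have hinit : splitMarking N.places p q (N.agglom {p, q} a).m0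
      ((N.agglom {p, q} a).m0 a) 0 = N.m0 := by
    have h := splitMarking_mergeMarking (p := p) (q := q) hwf.2.2.1 ha
    rw [hq0] at h
    rwa [agglom_pair_m0 N a hpq, mergeMarking_apply_self, hq0, Nat.add_zero]
  have h := Relation.ReflTransGen.lift' _
    (fun _ _ h => Step.splitMarking_reflTransGen hwf hca ha h) _ _ hM
  rwa [Function.onFun, hinit] at h

end Lift

end PNet

/-- Chain agglomeration of `p` and `q` as the fresh place `a`:
for every marking `m` on `P ∖ {p, q}` and all `x y : ℕ`, the marking extending `m`
with `p ↦ x` and `q ↦ y` is reachable in `N` iff the marking extending `m` with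
`a ↦ x + y` is reachable in the agglomerated net `N'`. -/
theorem chainAgglomeration_reach_iff {X T : Type} [DecidableEq X] (N : PNet X T)
    (hwf : N.WF) (p q : X) (t : T) (hca : N.ChainAgglomerable p q t)
    (a : X) (ha : a ∉ N.places)
    (m : X → ℕ) (hm : m ∈ ValuationOn (N.places \ {p, q})) (x y : ℕ) :
    Function.update (Function.update m p x) q y ∈ N.R ↔
      Function.update m a (x + y) ∈ (N.agglom {p, q} a).R := by
  constructor
  · intro h
    rw [← mergeMarking_update_update hca.ne hm]
    exact PNet.mergeMarking_mem_R_agglom_pair N a hca.ne h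
  · intro h
    have hlift := PNet.splitMarking_mem_R_of_mem_R_agglom_pair hwf hca ha h
    rw [update_self] at hlift
    rw [← splitMarking_update ha hm (x + y)]
    exact hlift.trans (hca.reflTransGen_splitMarking N.places _ x y)
end

section
/- Let N = (P, T, Pre, Post, m₀) be a marked Petri net, let (p, t) be a source-sink pair of N, and let N' be the net obtained from N by removing p and t. Then for every z ∈ ℕ with z ≤ m₀(p) and every marking m : P ∖ {p} → ℕ: the marking on P extending m with p ↦ z belongs to R(N) if and only if m ∈ R(N'). -/
/-! Transitions other than `t` neither consume nor produce tokens in `p`, and `t` only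
consumes one token from `p`. Hence restricting to `P ∖ {p}` maps every firing sequence of `N`
to one of `N'` (the firings of `t` become invisible), while every firing sequence of `N'`
lifts to `N` with `p` held at `m₀(p)`; from there, firing `t` repeatedly lowers the count
in `p` to any `z ≤ m₀(p)` without touching the other places. -/

open Function Relation

theorem restrictTo_update_of_notMem {X : Type} [DecidableEq X] {V : Set X} {p : X}
    (hp : p ∉ V) (f : X → ℕ) (z : ℕ) : restrictTo V (update f p z) = restrictTo V f := by
  funext x
  by_cases hx : x ∈ V
  · simp [restrictTo, hx, update_of_ne (ne_of_mem_of_not_mem hx hp)]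
  · simp [restrictTo, hx]

theorem restrictTo_eq_self {X : Type} {V : Set X} {f : X → ℕ} (hf : f ∈ ValuationOn V) :
    restrictTo V f = f :=
  Set.indicator_eq_self.2 fun x hx => by_contra fun hxV => hx (hf x hxV)

namespace PNet

variable {X T : Type} {N : PNet X T} {p : X} {t : T}

theorem update_removeSourceSink_m0 [DecidableEq X] (hwf : N.WF) :
    update (N.removeSourceSink p t).m0 p (N.m0 p) = N.m0 := by
  funext x
  by_cases hxp : x = p
  · simp [hxp]
  · by_cases hx : x ∈ N.places
    · simp [removeSourceSink, restrictTo, hxp, hx]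
    · simp [removeSourceSink, restrictTo, hxp, hx, hwf.2.2.1 x hx]

namespace SourceSink

theorem restrictTo_fire (hss : N.SourceSink p t) (m : X → ℕ) :
    restrictTo (N.places \ {p}) (N.fire t m) = restrictTo (N.places \ {p}) m := by
  obtain ⟨-, -, -, -, -, hpre_ne, hpost⟩ := hss
  funext x
  by_cases hx : x ∈ N.places \ {p}
  · simp [restrictTo, hx, fire, hpre_ne x hx.2, hpost x]
  · simp [restrictTo, hx]

theorem reflTransGen_step_restrictTo (hss : N.SourceSink p t) {a b : X → ℕ}
    (hab : N.Step a b) :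
    ReflTransGen (N.removeSourceSink p t).Step
      (restrictTo (N.places \ {p}) a) (restrictTo (N.places \ {p}) b) := by
  obtain ⟨u, ⟨huT, hen⟩, rfl⟩ := hab
  by_cases hut : u = t
  · subst hut
    rw [hss.restrictTo_fire]
  refine ReflTransGen.single ⟨u, ⟨⟨huT, hut⟩, fun x => ?_⟩, funext fun x => ?_⟩ <;>
    by_cases hx : x ∈ N.places \ {p}
  · simp [removeSourceSink, restrictTo, hx, hen x]
  · simp [removeSourceSink, restrictTo, hx]
  all_goals simp [removeSourceSink, restrictTo, fire, hx]

theorem restrictTo_mem_R (hss : N.SourceSink p t) {n : X → ℕ} (hn : n ∈ N.R) :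
    restrictTo (N.places \ {p}) n ∈ (N.removeSourceSink p t).R :=
  ReflTransGen.lift' (restrictTo (N.places \ {p}))
    (fun _ _ => hss.reflTransGen_step_restrictTo) _ _ hn

theorem step_update [DecidableEq X] (hwf : N.WF) (hss : N.SourceSink p t) {a b : X → ℕ}
    (hab : (N.removeSourceSink p t).Step a b) (k : ℕ) :
    N.Step (update a p k) (update b p k) := by
  obtain ⟨u, ⟨⟨huT, hut⟩, hen⟩, rfl⟩ := hab
  obtain ⟨-, -, hpost_p, hpre_p, -⟩ := hss
  have houtside (x) (hx : x ∉ N.places) := hwf.2.2.2 u huT x hx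
  refine ⟨u, ⟨huT, fun x => ?_⟩, funext fun x => ?_⟩ <;> by_cases hxp : x = p
  · simp [hxp, hpre_p u huT hut]
  · by_cases hx : x ∈ N.places
    · simpa [removeSourceSink, restrictTo, hxp, hx] using hen x
    · simp [hxp, houtside x hx]
  · simp [hxp, fire, hpre_p u huT hut, hpost_p u huT]
  · by_cases hx : x ∈ N.places
    · simp [removeSourceSink, restrictTo, fire, hxp, hx]
    · simp [removeSourceSink, restrictTo, fire, hxp, hx, houtside x hx]

theorem update_mem_R [DecidableEq X] (hwf : N.WF) (hss : N.SourceSink p t) {n : X → ℕ}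
    (hn : n ∈ (N.removeSourceSink p t).R) : update n p (N.m0 p) ∈ N.R := by
  have : ReflTransGen N.Step (update (N.removeSourceSink p t).m0 p (N.m0 p))
      (update n p (N.m0 p)) :=
    ReflTransGen.lift (update · p (N.m0 p)) (fun _ _ hab => hss.step_update hwf hab _) _ _ hn
  rwa [update_removeSourceSink_m0 hwf] at this

theorem step_update_succ [DecidableEq X] (hss : N.SourceSink p t) (m : X → ℕ) (k : ℕ) :
    N.Step (update m p (k + 1)) (update m p k) := by
  obtain ⟨-, htT, -, -, hpre_p, hpre_ne, hpost⟩ := hss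
  refine ⟨t, ⟨htT, fun x => ?_⟩, funext fun x => ?_⟩ <;> by_cases hxp : x = p <;>
    simp [hxp, fire, hpre_p, hpre_ne x, hpost]

theorem reflTransGen_update_of_le [DecidableEq X] (hss : N.SourceSink p t) (m : X → ℕ)
    {z k : ℕ} (hzk : z ≤ k) : ReflTransGen N.Step (update m p k) (update m p z) := by
  induction k, hzk using Nat.le_induction with
  | base => rfl
  | succ k _ ih => exact ReflTransGen.head (hss.step_update_succ m k) ih

end SourceSink

end PNet

/-- Removing a source-sink pair `(p, t)`: for every `z ≤ m₀(p)` and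
every marking `m` on `P ∖ {p}`, the marking extending `m` with `p ↦ z` is reachable
in `N` iff `m` is reachable in the reduced net `N'`. -/
theorem removeSourceSink_reach_iff {X T : Type} [DecidableEq X] (N : PNet X T)
    (hwf : N.WF) (p : X) (t : T) (hss : N.SourceSink p t)
    (z : ℕ) (hz : z ≤ N.m0 p)
    (m : X → ℕ) (hm : m ∈ ValuationOn (N.places \ {p})) :
    Function.update m p z ∈ N.R ↔ m ∈ (N.removeSourceSink p t).R := by
  constructor
  · intro h
    have := hss.restrictTo_mem_R h
    rwa [restrictTo_update_of_notMem (fun hp => hp.2 rfl), restrictTo_eq_self hm] at this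
  · intro h
    exact ReflTransGen.trans (hss.update_mem_R hwf h) (hss.reflTransGen_update_of_le m hz)
end
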